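/- arXiv:1707.01554 — 3 statements merged into one kernel-verified Lean document; each statement's English description precedes it below -/
import Mathlib

section
/- Let F ⊆ ℝⁿ be a connected closed set and f: ℝⁿ → ℝ a continuous concave function. Let x* ∈ F be a local maximizer of f over F, and suppose f(x) ≤ f(x*) for all x in the boundary ∂F of F. Then f(x) ≤ f(x*) for all x ∈ F; that is, x* is a global maximizer of f over F. -/
/-!
If `f y > f x*` for some `y ∈ F`, concavity makes `f > f x*` on the whole half-open segment
`(x*, y]`. By the boundary hypothesis this segment misses `∂F`; being connected and meeting `F`
at `y`, it lies in the interior of `F`. Its points close to `x*` then contradict local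
maximality.
-/

open Set Filter Topology AffineMap

theorem IsPreconnected.subset_interior_of_disjoint_frontier {X : Type*} [TopologicalSpace X]
    {S s : Set X} (hS : IsPreconnected S) (hSs : (S ∩ s).Nonempty)
    (hdisj : Disjoint S (frontier s)) : S ⊆ interior s := by
  have hcover : S ⊆ interior s ∪ interior sᶜ := by
    intro x hxS
    rw [interior_compl]
    by_cases hx : x ∈ closure s
    · exact .inl (by_contra fun hint ↦ disjoint_left.1 hdisj hxS ⟨hx, hint⟩)
    · exact .inr hx
  have hsep : Disjoint (interior s) (interior sᶜ) :=
    disjoint_compl_right.mono interior_subset interior_subset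
  refine hS.subset_left_of_subset_union isOpen_interior isOpen_interior hsep hcover ?_
  obtain ⟨x, hxS, hxs⟩ := hSs
  exact ⟨x, hxS, (hcover hxS).resolve_right fun hx ↦ interior_subset hx hxs⟩

theorem ConcaveOn.lt_lineMap_of_lt {E : Type*} [AddCommGroup E] [Module ℝ E] {s : Set E}
    {f : E → ℝ} (hf : ConcaveOn ℝ s f) {x y : E} (hx : x ∈ s) (hy : y ∈ s) (hxy : f x < f y)
    {t : ℝ} (ht : t ∈ Ioc 0 1) : f x < f (lineMap x y t) := by
  have hconc : (1 - t) * f x + t * f y ≤ f ((1 - t) • x + t • y) :=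
    hf.2 hx hy (sub_nonneg.2 ht.2) ht.1.le (by ring)
  rw [lineMap_apply_module]
  nlinarith [ht.1]

theorem local_max_boundary_max_implies_global_max_general
    {n : ℕ} (F : Set (EuclideanSpace ℝ (Fin n)))
    (f : EuclideanSpace ℝ (Fin n) → ℝ)
    (hconc : ConcaveOn ℝ Set.univ f)
    (xs : EuclideanSpace ℝ (Fin n))
    (hloc : ∃ N ∈ nhds xs, ∀ x ∈ N ∩ F, f x ≤ f xs)
    (hbnd : ∀ x ∈ frontier F, f x ≤ f xs) :
    ∀ x ∈ F, f x ≤ f xs := by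
  intro y hy
  by_contra! hlt
  obtain ⟨N, hN, hNmax⟩ := hloc
  have hgt : ∀ t ∈ Ioc (0 : ℝ) 1, f xs < f (lineMap xs y t) := fun t ht ↦
    hconc.lt_lineMap_of_lt trivial trivial hlt ht
  have hsegment : lineMap xs y '' Ioc (0 : ℝ) 1 ⊆ interior F := by
    refine (isPreconnected_Ioc.image _ lineMap_continuous.continuousOn)
      |>.subset_interior_of_disjoint_frontier
        ⟨y, ⟨1, right_mem_Ioc.2 one_pos, lineMap_apply_one _ _⟩, hy⟩ ?_
    rw [disjoint_left]
    rintro _ ⟨t, ht, rfl⟩ hfr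
    exact (hbnd _ hfr).not_gt (hgt t ht)
  have hnear : ∀ᶠ t in 𝓝[>] (0 : ℝ), lineMap xs y t ∈ N ∧ t ∈ Ioc 0 1 := by
    have htendsto : Tendsto (lineMap xs y) (𝓝[>] (0 : ℝ)) (𝓝 xs) :=
      (lineMap_continuous.tendsto' 0 xs (lineMap_apply_zero _ _)).mono_left nhdsWithin_le_nhds
    exact (htendsto.eventually_mem hN).and (Ioc_mem_nhdsGT one_pos)
  obtain ⟨t, htN, ht⟩ := hnear.exists
  exact (hNmax _ ⟨htN, interior_subset (hsegment ⟨t, ht, rfl⟩)⟩).not_gt (hgt t ht)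

theorem local_max_boundary_max_implies_global_max
    {n : ℕ} (F : Set (EuclideanSpace ℝ (Fin n)))
    (hFconn : IsConnected F) (hFclosed : IsClosed F)
    (f : EuclideanSpace ℝ (Fin n) → ℝ)
    (hfc : Continuous f) (hconc : ConcaveOn ℝ Set.univ f)
    (xs : EuclideanSpace ℝ (Fin n)) (hxs : xs ∈ F)
    (hloc : ∃ N ∈ nhds xs, ∀ x ∈ N ∩ F, f x ≤ f xs)
    (hbnd : ∀ x ∈ frontier F, f x ≤ f xs) :
    ∀ x ∈ F, f x ≤ f xs :=
  local_max_boundary_max_implies_global_max_general F f hconc xs hloc hbnd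
end

section
/- Let w, θᵘ, vˡ be positive reals with θᵘ ≤ π/6, vˡ ≥ 0.95, and w ≤ 1.1025. If (w^R, w^I) ∈ ℝ² satisfies 0 ≤ w^I ≤ w^R·tan(θᵘ) and (w^R)² + (w^I)² ≥ (vˡ)²·w, then w^R ≥ 0.77·w. -/
/-!
On the cone `0 ≤ w^I ≤ w^R tan θᵘ` we have `(w^I)² ≤ (w^R)² / 3`, because
`tan θᵘ ≤ tan (π/6) = 1/√3`. Hence `(vˡ)² w ≤ (4/3) (w^R)²`, i.e. `(w^R)² ≥ 0.676875 w`;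
and since `w ≤ 1.1025` gives `(0.77 w)² ≤ 0.77² · 1.1025 · w < 0.655 w`,
taking square roots yields `w^R ≥ 0.77 w`.
-/

open Real

theorem Real.tan_sq_le_one_third {θ : ℝ} (h0 : 0 ≤ θ) (h : θ ≤ π / 6) : tan θ ^ 2 ≤ 1 / 3 := by
  have hmem : ∀ {x}, 0 ≤ x → x ≤ π / 6 → x ∈ Set.Ioo (-(π / 2)) (π / 2) := fun hx hx' =>
    ⟨by linarith [pi_pos], by linarith [pi_pos]⟩
  have hmono := strictMonoOn_tan.monotoneOn
  have htan_nonneg : 0 ≤ tan θ := by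
    simpa using hmono (hmem le_rfl (by positivity)) (hmem h0 h) h0
  have htan_le : tan θ ≤ 1 / √3 :=
    tan_pi_div_six ▸ hmono (hmem h0 h) (hmem (by positivity) le_rfl) h
  calc tan θ ^ 2 ≤ (1 / √3) ^ 2 := pow_le_pow_left₀ htan_nonneg htan_le 2
    _ = 1 / 3 := by rw [div_pow, one_pow, sq_sqrt (by norm_num)]

theorem sq_add_sq_le_of_le_mul {x y t c : ℝ} (hy0 : 0 ≤ y) (hy : y ≤ x * t) (ht : t ^ 2 ≤ c) :
    x ^ 2 + y ^ 2 ≤ (1 + c) * x ^ 2 := by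
  have hy2 : y ^ 2 ≤ (x * t) ^ 2 := pow_le_pow_left₀ hy0 hy 2
  nlinarith [sq_nonneg x]

theorem mul_le_of_mul_le_sq {w x a c W : ℝ} (hw : 0 ≤ w) (hwW : w ≤ W) (hx : 0 ≤ x)
    (hcW : c ^ 2 * W ≤ a) (hax : a * w ≤ x ^ 2) : c * w ≤ x := by
  refine le_of_pow_le_pow_left₀ two_ne_zero hx ?_
  calc (c * w) ^ 2 = c ^ 2 * w * w := by ring
    _ ≤ c ^ 2 * W * w := by gcongr
    _ ≤ a * w := by gcongr
    _ ≤ x ^ 2 := hax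

theorem opf_minimal_feasible_wR_general
    (w θu vl wR wI : ℝ)
    (hw : 0 < w) (hθu : 0 < θu)
    (hθu' : θu ≤ Real.pi / 6) (hvl' : 0.95 ≤ vl) (hw' : w ≤ 1.1025)
    (hwI0 : 0 ≤ wI) (hwI : wI ≤ wR * Real.tan θu)
    (hcirc : vl ^ 2 * w ≤ wR ^ 2 + wI ^ 2) :
    0.77 * w ≤ wR := by
  have htan_pos : 0 < tan θu := tan_pos_of_pos_of_lt_pi_div_two hθu (by linarith [pi_pos])
  have hwR : 0 ≤ wR := nonneg_of_mul_nonneg_left (hwI0.trans hwI) htan_pos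
  have hcone := sq_add_sq_le_of_le_mul hwI0 hwI (tan_sq_le_one_third hθu.le hθu')
  have hvl2 : 0.9025 ≤ vl ^ 2 := by nlinarith
  refine mul_le_of_mul_le_sq hw.le hw' hwR (a := 0.9025 * (3 / 4)) (by norm_num) ?_
  nlinarith

theorem opf_minimal_feasible_wR
    (w θu vl wR wI : ℝ)
    (hw : 0 < w) (hθu : 0 < θu) (hvl : 0 < vl)
    (hθu' : θu ≤ Real.pi / 6) (hvl' : 0.95 ≤ vl) (hw' : w ≤ 1.1025)
    (hwI0 : 0 ≤ wI) (hwI : wI ≤ wR * Real.tan θu)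
    (hcirc : vl ^ 2 * w ≤ wR ^ 2 + wI ^ 2) :
    0.77 * w ≤ wR :=
  opf_minimal_feasible_wR_general w θu vl wR wI hw hθu hθu' hvl' hw' hwI0 hwI hcirc
end

section
/- Let w > 0, sᵘ > 0, Y > 0 and define R(w^R) = sqrt((2w^R − w)² + 4sᵘ/Y) and φ(w^R) = (w/2)(2w^R − w + R(w^R)) − (w^R)². Then φ''(w^R) < 0 (φ is strictly concave at w^R) if and only if 4sᵘw/Y < R(w^R)³. -/
theorem thermal_limit_concavity_criterion
    (w su Y : ℝ) (hw : 0 < w) (hsu : 0 < su) (hY : 0 < Y)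
    (R φ : ℝ → ℝ)
    (hR : ∀ t, R t = Real.sqrt ((2 * t - w) ^ 2 + 4 * su / Y))
    (hφ : ∀ t, φ t = w / 2 * (2 * t - w + R t) - t ^ 2)
    (t : ℝ) :
    deriv (deriv φ) t < 0 ↔ 4 * su * w / Y < (R t) ^ 3 := by
  have hupos : ∀ x : ℝ, 0 < (2 * x - w) ^ 2 + 4 * su / Y := fun x => by positivity
  have hRpos : ∀ x, 0 < R x := fun x => by
    rw [hR]; exact Real.sqrt_pos.mpr (hupos x)
  have hRsq : ∀ x, R x ^ 2 = (2 * x - w) ^ 2 + 4 * su / Y := fun x => by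
    rw [hR, Real.sq_sqrt (hupos x).le]
  have hRder : ∀ x, HasDerivAt R (2 * (2 * x - w) / R x) x := by
    intro x
    have hlin : HasDerivAt (fun y : ℝ => 2 * y - w) 2 x := by
      simpa using ((hasDerivAt_id x).const_mul 2).sub_const w
    have h1 : HasDerivAt (fun y : ℝ => (2 * y - w) ^ 2 + 4 * su / Y)
        (2 * (2 * x - w) ^ 1 * 2) x := (hlin.pow 2).add_const (4 * su / Y)
    have h2 := h1.sqrt (ne_of_gt (hupos x))
    have h3 : HasDerivAt (fun y => Real.sqrt ((2 * y - w) ^ 2 + 4 * su / Y))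
        (2 * (2 * x - w) / R x) x := by
      convert h2 using 1
      rw [hR]; ring
    exact h3.congr_of_eventuallyEq (Filter.Eventually.of_forall hR)
  -- first derivative
  have hφder : ∀ x, HasDerivAt φ
      (w / 2 * (2 + 2 * (2 * x - w) / R x) - 2 * x) x := by
    intro x
    have hin : HasDerivAt (fun y => 2 * y - w + R y) (2 + 2 * (2 * x - w) / R x) x := by
      have hlin : HasDerivAt (fun y : ℝ => 2 * y - w) 2 x := by
        simpa using ((hasDerivAt_id x).const_mul 2).sub_const w
      exact hlin.add (hRder x)
    have hsq : HasDerivAt (fun y : ℝ => y ^ 2) (2 * x) x := by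
      simpa using hasDerivAt_pow 2 x
    have h4 : HasDerivAt (fun y => w / 2 * (2 * y - w + R y) - y ^ 2)
        (w / 2 * (2 + 2 * (2 * x - w) / R x) - 2 * x) x := (hin.const_mul (w / 2)).sub hsq
    exact h4.congr_of_eventuallyEq (Filter.Eventually.of_forall hφ)
  have hderφ : deriv φ = fun x => w / 2 * (2 + 2 * (2 * x - w) / R x) - 2 * x :=
    funext fun x => (hφder x).deriv
  -- second derivative
  have hnum : HasDerivAt (fun y => 2 * (2 * y - w)) 4 t := by
    have h := (((hasDerivAt_id t).const_mul 2).sub_const w).const_mul 2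
    simp only [id_eq] at h
    rw [show (4:ℝ) = 2 * (2 * 1) by norm_num]
    exact h
  have hdiv : HasDerivAt (fun y => 2 * (2 * y - w) / R y)
      ((4 * R t - 2 * (2 * t - w) * (2 * (2 * t - w) / R t)) / R t ^ 2) t :=
    hnum.div (hRder t) (ne_of_gt (hRpos t))
  have h2der : HasDerivAt (deriv φ)
      (w / 2 * ((4 * R t - 2 * (2 * t - w) * (2 * (2 * t - w) / R t)) / R t ^ 2) - 2) t := by
    rw [hderφ]
    have hlin2 : HasDerivAt (fun y : ℝ => 2 * y) 2 t := by
      simpa using (hasDerivAt_id t).const_mul 2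
    have h := (((hasDerivAt_const t (2:ℝ)).add hdiv).const_mul (w / 2)).sub hlin2
    exact h.congr_deriv (by ring)
  have hval : deriv (deriv φ) t = 2 * w * (4 * su / Y) / R t ^ 3 - 2 := by
    rw [h2der.deriv]
    have hRne := ne_of_gt (hRpos t)
    have hs := hRsq t
    have hs' : Y * R t ^ 2 = Y * (2 * t - w) ^ 2 + 4 * su := by
      field_simp at hs; linarith
    field_simp
    linear_combination (4 * w) * hs'
  rw [hval, sub_neg, div_lt_iff₀ (pow_pos (hRpos t) 3)]
  have e : 2 * w * (4 * su / Y) = 2 * (4 * su * w / Y) := by ring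
  rw [e]
  constructor <;> intro h <;> linarith
end
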